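/- arXiv:2303.16443 — 2 statements merged into one kernel-verified Lean document; each statement's English description precedes it below -/
import Mathlib

section
/- Let n, d, q be positive integers, let Z be a real n×d matrix such that ZᵀZ is invertible, and let P = Z(ZᵀZ)⁻¹Zᵀ be the orthogonal projection onto the column space of Z. Let B₀, B̂, C be real d×q matrices, let E be a real n×q matrix, and set R₀ ≥ 1 an integer. Let δ > 0, μ ≥ 0, λ > 0 be real numbers, set 𝒞(δ) = 1 + 2/δ, and assume 𝒞(δ)⁻¹ − 2μλ⁻² > 0. Suppose the following 'basic inequality' holds: ‖Z(B̂−B₀)‖_F² ≤ ‖Z(C−B₀)‖_F² + 2√(2R₀)·σ₁(P E)·(‖Z(B̂−B₀)‖_F + ‖Z(C−B₀)‖_F) + 4μ·σ₁(C)² + 2μλ⁻²·(‖Z(B̂−B₀)‖_F² + ‖Z(C−B₀)‖_F²). Then ‖Z(B̂−B₀)‖_F² ≤ (𝒞(δ)⁻¹ − 2μλ⁻²)⁻¹·{4μ·σ₁(C)² + 2(1+δ)R₀·σ₁(P E)²} + ((𝒞(δ) + 2μλ⁻²)/(𝒞(δ)⁻¹ − 2μλ⁻²))·‖Z(C−B₀)‖_F².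 -/
open Matrix

/-- `Aᵀ * A` is Hermitian for a real matrix `A`. -/
lemma herm {m n : ℕ} (A : Matrix (Fin m) (Fin n) ℝ) : (Aᵀ * A).IsHermitian := by
  have h := Matrix.isHermitian_conjTranspose_mul_self A
  simpa [Matrix.conjTranspose_eq_transpose_of_trivial] using h

/-- The largest singular value of a real matrix: the square root of the largest
eigenvalue of `Aᵀ * A`. -/
noncomputable def sigma1 {m n : ℕ} (A : Matrix (Fin m) (Fin n) ℝ) : ℝ :=
  Real.sqrt (⨆ i, (herm A).eigenvalues i)

/-- The Frobenius norm `‖A‖_F = √(trace (Aᵀ A))`. -/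
noncomputable def frobNorm {m n : ℕ} (A : Matrix (Fin m) (Fin n) ℝ) : ℝ :=
  Real.sqrt (Matrix.trace (Aᵀ * A))

/-
Write `𝒞 = 1 + 2/δ` and `t = √(2R₀) σ₁(PE)`. Peter–Paul's inequality with weights `2/(δ+2)` and
`2/δ` absorbs the cross terms `2ta` and `2tb` of the basic inequality into `a²` and `b²`, turning
the coefficient `1` of `a²` into `𝒞⁻¹ = 1 - 2/(δ+2)` and that of `b²` into `𝒞`, at the price of
`((δ+2)/2 + δ/2) t² = (1+δ) t²`. Dividing by the positive constant `𝒞⁻¹ - 2μλ⁻²` finishes.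
-/

lemma sq_le_of_sq_le_add_two_mul_add {a b t c K δ : ℝ} (hδ : 0 < δ)
    (hpos : (1 + 2 / δ)⁻¹ - K > 0)
    (h : a ^ 2 ≤ b ^ 2 + 2 * t * (a + b) + c + K * (a ^ 2 + b ^ 2)) :
    a ^ 2 ≤ ((1 + 2 / δ)⁻¹ - K)⁻¹ * (c + (1 + δ) * t ^ 2)
      + ((1 + 2 / δ) + K) / ((1 + 2 / δ)⁻¹ - K) * b ^ 2 := by
  have hδ₂ : 0 < δ + 2 := by linarith
  have young_a := two_mul_le_add_mul_sq (a := a) (b := t) (div_pos two_pos hδ₂)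
  have young_b := two_mul_le_add_mul_sq (a := b) (b := t) (div_pos two_pos hδ)
  have hinv : (1 + 2 / δ)⁻¹ = 1 - 2 / (δ + 2) := by field_simp; ring
  rw [inv_div] at young_a young_b
  have key : a ^ 2 * ((1 + 2 / δ)⁻¹ - K) ≤ c + (1 + δ) * t ^ 2 + ((1 + 2 / δ) + K) * b ^ 2 := by
    rw [hinv]
    linear_combination h + young_a + young_b
  have hrhs : ((1 + 2 / δ)⁻¹ - K)⁻¹ * (c + (1 + δ) * t ^ 2)
      + ((1 + 2 / δ) + K) / ((1 + 2 / δ)⁻¹ - K) * b ^ 2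
      = (c + (1 + δ) * t ^ 2 + ((1 + 2 / δ) + K) * b ^ 2) / ((1 + 2 / δ)⁻¹ - K) := by ring
  rw [hrhs, le_div_iff₀ hpos]
  exact key

theorem stmt_0_general {n d q : ℕ}
    (Z : Matrix (Fin n) (Fin d) ℝ)
    (B₀ Bhat C : Matrix (Fin d) (Fin q) ℝ) (E : Matrix (Fin n) (Fin q) ℝ)
    (R₀ : ℕ)
    (δ μ lam : ℝ) (hδ : 0 < δ)
    (hpos : (1 + 2 / δ)⁻¹ - 2 * μ * lam⁻¹ ^ 2 > 0)
    (hbasic :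
      frobNorm (Z * (Bhat - B₀)) ^ 2 ≤
        frobNorm (Z * (C - B₀)) ^ 2
          + 2 * Real.sqrt (2 * R₀) * sigma1 (Z * (Zᵀ * Z)⁻¹ * Zᵀ * E)
              * (frobNorm (Z * (Bhat - B₀)) + frobNorm (Z * (C - B₀)))
          + 4 * μ * (sigma1 C) ^ 2
          + 2 * μ * lam⁻¹ ^ 2
              * (frobNorm (Z * (Bhat - B₀)) ^ 2 + frobNorm (Z * (C - B₀)) ^ 2)) :
    frobNorm (Z * (Bhat - B₀)) ^ 2 ≤
      ((1 + 2 / δ)⁻¹ - 2 * μ * lam⁻¹ ^ 2)⁻¹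
          * (4 * μ * (sigma1 C) ^ 2
              + 2 * (1 + δ) * R₀ * (sigma1 (Z * (Zᵀ * Z)⁻¹ * Zᵀ * E)) ^ 2)
        + (((1 + 2 / δ) + 2 * μ * lam⁻¹ ^ 2) / ((1 + 2 / δ)⁻¹ - 2 * μ * lam⁻¹ ^ 2))
            * frobNorm (Z * (C - B₀)) ^ 2 := by
  set s := sigma1 (Z * (Zᵀ * Z)⁻¹ * Zᵀ * E)
  have hnoise : 2 * (1 + δ) * R₀ * s ^ 2 = (1 + δ) * (Real.sqrt (2 * R₀) * s) ^ 2 := by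
    rw [mul_pow, Real.sq_sqrt (by positivity)]
    ring
  rw [hnoise]
  exact sq_le_of_sq_le_add_two_mul_add hδ hpos (by linarith)

/-- Deterministic core of Theorem 1: prediction-error oracle inequality, conditional
on the basic inequality from the minimizing property of the estimator. -/
theorem stmt_0 {n d q : ℕ} (hn : 0 < n) (hd : 0 < d) (hq : 0 < q)
    (Z : Matrix (Fin n) (Fin d) ℝ) (hZ : IsUnit (Zᵀ * Z).det)
    (B₀ Bhat C : Matrix (Fin d) (Fin q) ℝ) (E : Matrix (Fin n) (Fin q) ℝ)
    (R₀ : ℕ) (hR₀ : 1 ≤ R₀)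
    (δ μ lam : ℝ) (hδ : 0 < δ) (hμ : 0 ≤ μ) (hlam : 0 < lam)
    (hpos : (1 + 2 / δ)⁻¹ - 2 * μ * lam⁻¹ ^ 2 > 0)
    (hbasic :
      frobNorm (Z * (Bhat - B₀)) ^ 2 ≤
        frobNorm (Z * (C - B₀)) ^ 2
          + 2 * Real.sqrt (2 * R₀) * sigma1 (Z * (Zᵀ * Z)⁻¹ * Zᵀ * E)
              * (frobNorm (Z * (Bhat - B₀)) + frobNorm (Z * (C - B₀)))
          + 4 * μ * (sigma1 C) ^ 2
          + 2 * μ * lam⁻¹ ^ 2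
              * (frobNorm (Z * (Bhat - B₀)) ^ 2 + frobNorm (Z * (C - B₀)) ^ 2)) :
    frobNorm (Z * (Bhat - B₀)) ^ 2 ≤
      ((1 + 2 / δ)⁻¹ - 2 * μ * lam⁻¹ ^ 2)⁻¹
          * (4 * μ * (sigma1 C) ^ 2
              + 2 * (1 + δ) * R₀ * (sigma1 (Z * (Zᵀ * Z)⁻¹ * Zᵀ * E)) ^ 2)
        + (((1 + 2 / δ) + 2 * μ * lam⁻¹ ^ 2) / ((1 + 2 / δ)⁻¹ - 2 * μ * lam⁻¹ ^ 2))
            * frobNorm (Z * (C - B₀)) ^ 2 :=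
  stmt_0_general Z B₀ Bhat C E R₀ δ μ lam hδ hpos hbasic
end

section
/- Let Z be a real n×d matrix such that ZᵀZ is invertible, let P = Z(ZᵀZ)⁻¹Zᵀ, let E be a real n×q matrix, and let M be a real d×q matrix with rank(M) ≤ r for an integer r ≥ 1. Then |⟨E, Z M⟩_F| ≤ σ₁(P E) · √r · ‖Z M‖_F. -/
/-!
`P` is symmetric and fixes the columns of `Z`, so `⟨E, ZM⟩ = ⟨PE, ZM⟩`. Put `A = PE`, `W = ZM`
and `k = rank W ≤ r`, and let `C` be a `k × q` matrix whose orthonormal rows span the row space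
of `W`, so that `W = W Cᵀ C`. Then `⟨A, W⟩ = ⟨A Cᵀ, W Cᵀ⟩ ≤ ‖A Cᵀ‖_F ‖W Cᵀ‖_F`, where
`‖W Cᵀ‖_F = ‖W‖_F`, and `‖A Cᵀ‖_F² = tr (C AᵀA Cᵀ) ≤ σ₁(A)² tr (C Cᵀ) = k σ₁(A)²` because
`AᵀA ≤ σ₁(A)² • 1` in the Loewner order.
-/

open Matrix

namespace Matrix

variable {m n : Type*} [Fintype m] [Fintype n]

theorem trace_transpose_mul_eq_sum (A B : Matrix m n ℝ) :
    (Aᵀ * B).trace = ∑ i, ∑ j, A i j * B i j := by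
  simp only [trace, diag, mul_apply, transpose_apply]
  exact Finset.sum_comm

theorem abs_trace_transpose_mul_le (A B : Matrix m n ℝ) :
    |(Aᵀ * B).trace| ≤ √(Aᵀ * A).trace * √(Bᵀ * B).trace := by
  simp only [trace_transpose_mul_eq_sum, ← Finset.sum_product', ← Real.sqrt_mul
    (Finset.sum_nonneg fun _ _ => mul_self_nonneg _)]
  exact Real.abs_le_sqrt (Finset.sum_mul_sq_le_sq_mul_sq _ _ _ |>.trans_eq (by simp only [sq]))

theorem exists_orthonormal_rows_mul_eq [DecidableEq n] (W : Matrix m n ℝ) :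
    ∃ C : Matrix (Fin W.rank) n ℝ, C * Cᵀ = 1 ∧ W * Cᵀ * C = W := by
  let S : Submodule ℝ (EuclideanSpace ℝ n) := .span ℝ (Set.range fun i => WithLp.toLp 2 (W i))
  have hS : Module.finrank ℝ S = W.rank := by
    rw [rank_eq_finrank_span_row,
      ← LinearEquiv.finrank_map_eq (WithLp.linearEquiv 2 ℝ (n → ℝ)).symm,
      Submodule.map_span, ← Set.range_comp]
    rfl
  let b := (stdOrthonormalBasis ℝ S).reindex (finCongr hS)
  refine ⟨.of fun i => (b i : EuclideanSpace ℝ n).ofLp, ?_, ?_⟩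
  · ext i j
    have h := orthonormal_iff_ite.mp b.orthonormal j i
    simp only [Submodule.coe_inner, PiLp.inner_apply, RCLike.inner_apply, conj_trivial] at h
    simpa [mul_apply, one_apply, eq_comm] using h
  · ext i t
    have h := congrArg (fun v : S => (v : EuclideanSpace ℝ n) t)
      (b.sum_repr' ⟨WithLp.toLp 2 (W i), Submodule.subset_span ⟨i, rfl⟩⟩)
    simp only [Submodule.coe_inner, PiLp.inner_apply, RCLike.inner_apply, conj_trivial] at h
    simpa [mul_apply, Finset.sum_mul] using h

variable {R : Type*} [CommRing R] [DecidableEq n]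

theorem transpose_mul_nonsing_inv_mul_transpose (Z : Matrix m n R) :
    (Z * (Zᵀ * Z)⁻¹ * Zᵀ)ᵀ = Z * (Zᵀ * Z)⁻¹ * Zᵀ := by
  rw [transpose_mul, transpose_mul, transpose_transpose, transpose_nonsing_inv, transpose_mul,
    transpose_transpose, Matrix.mul_assoc]

theorem mul_nonsing_inv_mul_transpose_mul_self (Z : Matrix m n R) (hZ : IsUnit (Zᵀ * Z).det) :
    Z * (Zᵀ * Z)⁻¹ * Zᵀ * Z = Z := by
  rw [Matrix.mul_assoc, Matrix.mul_assoc, nonsing_inv_mul _ hZ, Matrix.mul_one]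

end Matrix

section

variable {p q : ℕ}

theorem sigma1_nonneg (A : Matrix (Fin p) (Fin q) ℝ) : 0 ≤ sigma1 A :=
  Real.sqrt_nonneg _

theorem sq_sigma1 (A : Matrix (Fin p) (Fin q) ℝ) :
    sigma1 A ^ 2 = ⨆ i, (herm A).eigenvalues i :=
  Real.sq_sqrt <| Real.iSup_nonneg fun i =>
    (posSemidef_conjTranspose_mul_self A).eigenvalues_nonneg i

open scoped MatrixOrder in
theorem transpose_mul_self_le_sigma1_sq (A : Matrix (Fin p) (Fin q) ℝ) :
    Aᵀ * A ≤ algebraMap ℝ _ (sigma1 A ^ 2) := by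
  refine le_algebraMap_of_spectrum_le (fun x hx => ?_) (herm A).isSelfAdjoint
  rw [(herm A).spectrum_real_eq_range_eigenvalues] at hx
  obtain ⟨i, rfl⟩ := hx
  exact sq_sigma1 A ▸ le_ciSup (Set.finite_range _).bddAbove i

theorem trace_mul_transpose_mul_self_mul_transpose_le {k : Type*} [Fintype k]
    (A : Matrix (Fin p) (Fin q) ℝ) (C : Matrix k (Fin q) ℝ) :
    (C * (Aᵀ * A) * Cᵀ).trace ≤ sigma1 A ^ 2 * (C * Cᵀ).trace := by
  have h := ((le_iff.mp (transpose_mul_self_le_sigma1_sq A)).mul_mul_conjTranspose_same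
    C).trace_nonneg
  rw [conjTranspose_eq_transpose_of_trivial, Algebra.algebraMap_eq_smul_one, Matrix.mul_sub,
    Matrix.sub_mul, trace_sub, Matrix.mul_smul, Matrix.smul_mul, trace_smul, Matrix.mul_one] at h
  simpa [smul_eq_mul] using h

theorem frobNorm_mul_transpose_le {k : ℕ} (A : Matrix (Fin p) (Fin q) ℝ)
    {C : Matrix (Fin k) (Fin q) ℝ} (hC : C * Cᵀ = 1) :
    frobNorm (A * Cᵀ) ≤ sigma1 A * √k := by
  have h := trace_mul_transpose_mul_self_mul_transpose_le A C
  rw [hC, trace_one, Fintype.card_fin] at h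
  rw [frobNorm, transpose_mul, transpose_transpose, ← Matrix.mul_assoc, Matrix.mul_assoc C]
  calc √(C * (Aᵀ * A) * Cᵀ).trace ≤ √(sigma1 A ^ 2 * k) := Real.sqrt_le_sqrt h
    _ = sigma1 A * √k := by rw [Real.sqrt_mul (sq_nonneg _), Real.sqrt_sq (sigma1_nonneg A)]

theorem frobNorm_mul_transpose_eq {k : ℕ} {W : Matrix (Fin p) (Fin q) ℝ}
    {C : Matrix (Fin k) (Fin q) ℝ} (hWC : W * Cᵀ * C = W) :
    frobNorm (W * Cᵀ) = frobNorm W := by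
  rw [frobNorm, frobNorm, transpose_mul, transpose_transpose, Matrix.mul_assoc, trace_mul_comm,
    Matrix.mul_assoc, hWC]

theorem abs_trace_transpose_mul_le_sigma1_mul_sqrt_rank (A W : Matrix (Fin p) (Fin q) ℝ) :
    |(Aᵀ * W).trace| ≤ sigma1 A * √W.rank * frobNorm W := by
  obtain ⟨C, hC, hWC⟩ := exists_orthonormal_rows_mul_eq W
  have htrace : (Aᵀ * W).trace = ((A * Cᵀ)ᵀ * (W * Cᵀ)).trace := by
    rw [transpose_mul, transpose_transpose, Matrix.mul_assoc, trace_mul_comm C,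
      Matrix.mul_assoc Aᵀ, hWC]
  calc |(Aᵀ * W).trace| ≤ frobNorm (A * Cᵀ) * frobNorm (W * Cᵀ) :=
        htrace ▸ abs_trace_transpose_mul_le _ _
    _ ≤ sigma1 A * √W.rank * frobNorm W := by
        rw [frobNorm_mul_transpose_eq hWC]
        exact mul_le_mul_of_nonneg_right (frobNorm_mul_transpose_le A hC) (Real.sqrt_nonneg _)

end

theorem stmt_12_general {n d q : ℕ} (Z : Matrix (Fin n) (Fin d) ℝ)
    (hZ : IsUnit (Zᵀ * Z).det)
    (E : Matrix (Fin n) (Fin q) ℝ) (M : Matrix (Fin d) (Fin q) ℝ)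
    (r : ℕ) (hM : M.rank ≤ r) :
    |Matrix.trace (Eᵀ * (Z * M))| ≤
      sigma1 (Z * (Zᵀ * Z)⁻¹ * Zᵀ * E) * Real.sqrt r * frobNorm (Z * M) := by
  have hproj : (Z * (Zᵀ * Z)⁻¹ * Zᵀ * E)ᵀ * (Z * M) = Eᵀ * (Z * M) := by
    rw [transpose_mul, transpose_mul_nonsing_inv_mul_transpose, Matrix.mul_assoc,
      ← Matrix.mul_assoc _ Z, mul_nonsing_inv_mul_transpose_mul_self Z hZ]
  have hrank : ((Z * M).rank : ℝ) ≤ r := by exact_mod_cast (rank_mul_le_right Z M).trans hM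
  calc |(Eᵀ * (Z * M)).trace|
      ≤ sigma1 (Z * (Zᵀ * Z)⁻¹ * Zᵀ * E) * √(Z * M).rank * frobNorm (Z * M) :=
        hproj ▸ abs_trace_transpose_mul_le_sigma1_mul_sqrt_rank _ _
    _ ≤ sigma1 (Z * (Zᵀ * Z)⁻¹ * Zᵀ * E) * √r * frobNorm (Z * M) :=
        mul_le_mul_of_nonneg_right
          (mul_le_mul_of_nonneg_left (Real.sqrt_le_sqrt hrank) (sigma1_nonneg _))
          (Real.sqrt_nonneg _)

/-- Bound on the cross term: `|⟨E, ZM⟩_F| ≤ σ₁(PE)·√r·‖ZM‖_F` for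
`P = Z(ZᵀZ)⁻¹Zᵀ` and `rank(M) ≤ r`. -/
theorem stmt_12 {n d q : ℕ} (Z : Matrix (Fin n) (Fin d) ℝ)
    (hZ : IsUnit (Zᵀ * Z).det)
    (E : Matrix (Fin n) (Fin q) ℝ) (M : Matrix (Fin d) (Fin q) ℝ)
    (r : ℕ) (hr : 1 ≤ r) (hM : M.rank ≤ r) :
    |Matrix.trace (Eᵀ * (Z * M))| ≤
      sigma1 (Z * (Zᵀ * Z)⁻¹ * Zᵀ * E) * Real.sqrt r * frobNorm (Z * M) :=
  stmt_12_general Z hZ E M r hM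
end
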